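/- Let r ∈ [0, ∞) and let γ̄_{h^{(r)}} be the common limit of the sequences a_n(r) and b_n(r). For each natural number n ≥ 1, with C(n,r) = h_n^{(r)}/n^{r̄} − ∫_n^{n+1} h_x^{(r)}/x^{r̄} dx and D(n,r) = ∫_n^{n+1} h_x^{(r)}/x^{r̄} dx, one has C(n,r) < γ̄_{h^{(r)}} − a_n(r) < C(n,r) + h_{n+1}^{(r)}/(n+1)^{r̄}, and D(n,r) − h_{n+1}^{(r)}/(n+1)^{r̄} < b_n(r) − γ̄_{h^{(r)}} < D(n,r). -/

import Mathlib

open MeasureTheory Filter Topology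

/-- The digamma function `ψ(x) = Γ'(x)/Γ(x)`. -/
noncomputable def digamma (x : ℝ) : ℝ := deriv Real.Gamma x / Real.Gamma x

/-- The rising factorial `x^{r̄} = Γ(x+r)/Γ(x)`. -/
noncomputable def rise (x r : ℝ) : ℝ := Real.Gamma (x + r) / Real.Gamma x

/-- The analytic extension of the hyperharmonic numbers:
`h_x^{(r)} = (x^{r̄}/(x Γ(r)))(ψ(x+r) − ψ(r))` for `r > 0`, and `h_x^{(0)} = 1/x`. -/
noncomputable def hyp (r x : ℝ) : ℝ :=
  if r = 0 then 1 / x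
  else rise x r / (x * Real.Gamma r) * (digamma (x + r) - digamma r)

/-- `y_n(r) = ∑_{k=1}^n h_k^{(r)}/k^r − ∫_1^n h_x^{(r)}/x^r dx`. -/
noncomputable def yseq (r : ℝ) (n : ℕ) : ℝ :=
  ∑ k ∈ Finset.Icc 1 n, hyp r k / (k : ℝ) ^ r - ∫ x in (1:ℝ)..(n:ℝ), hyp r x / x ^ r

/-- `z_n(r) = ∑_{k=1}^{n-1} h_k^{(r)}/k^r − ∫_1^n h_x^{(r)}/x^r dx`. -/
noncomputable def zseq (r : ℝ) (n : ℕ) : ℝ :=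
  ∑ k ∈ Finset.Icc 1 (n - 1), hyp r k / (k : ℝ) ^ r - ∫ x in (1:ℝ)..(n:ℝ), hyp r x / x ^ r

/-- `b_n(r) = ∑_{k=1}^n h_k^{(r)}/k^{r̄} − ∫_1^n h_x^{(r)}/x^{r̄} dx`. -/
noncomputable def bseq (r : ℝ) (n : ℕ) : ℝ :=
  ∑ k ∈ Finset.Icc 1 n, hyp r k / rise k r - ∫ x in (1:ℝ)..(n:ℝ), hyp r x / rise x r

/-- `a_n(r) = ∑_{k=1}^{n-1} h_k^{(r)}/k^{r̄} − ∫_1^n h_x^{(r)}/x^{r̄} dx`. -/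
noncomputable def aseq (r : ℝ) (n : ℕ) : ℝ :=
  ∑ k ∈ Finset.Icc 1 (n - 1), hyp r k / rise k r - ∫ x in (1:ℝ)..(n:ℝ), hyp r x / rise x r

/-! Write `F x = h_x^{(r)} / x^{r̄}`. For `r = 0`, `F x = 1 / x`. For `r > 0`,
`F x = (ψ(x + r) - ψ(r)) / (x Γ(r))`, and telescoping `ψ(y + 1) = ψ(y) + 1 / y` (the error term
`ψ(x + r + n) - ψ(r + n)` tends to `0` by monotonicity of `ψ`, i.e. convexity of `log Γ`) gives
`(ψ(x + r) - ψ(r)) / x = ∑ₖ 1 / ((r + k)(x + r + k))`, a sum of terms strictly decreasing in `x`.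
So `F` is strictly decreasing on `(0, ∞)`, whence `F (n + 1) < ∫ₙⁿ⁺¹ F < F n`. Together with
`b_n = a_n + F n` and `a_{n+1} = b_n - ∫ₙⁿ⁺¹ F` this makes `a_n` strictly increasing and `b_n`
strictly decreasing, so `a_{n+1} < γ̄ < b_{n+1}`, and the four estimates are rearrangements. -/

open Real Set

lemma differentiableAt_Gamma_of_pos {x : ℝ} (hx : 0 < x) : DifferentiableAt ℝ Gamma x :=
  differentiableAt_Gamma fun m => by linarith [(m.cast_nonneg : (0 : ℝ) ≤ m)]

lemma digamma_eq_deriv_log_Gamma {x : ℝ} (hx : 0 < x) : digamma x = deriv (log ∘ Gamma) x := by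
  rw [digamma, Function.comp_def,
    deriv.log (differentiableAt_Gamma_of_pos hx) (Gamma_pos_of_pos hx).ne']

lemma digamma_add_one {x : ℝ} (hx : 0 < x) : digamma (x + 1) = digamma x + 1 / x := by
  have hshift : logDeriv (Gamma ∘ (· + 1)) x = digamma (x + 1) := by
    rw [logDeriv_comp (differentiableAt_Gamma_of_pos (by positivity)) (by fun_prop)]
    simp [digamma, logDeriv_apply]
  have hrec : Gamma ∘ (· + 1) =ᶠ[𝓝 x] fun y => y * Gamma y := by
    filter_upwards [eventually_gt_nhds hx] with y hy using Gamma_add_one hy.ne'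
  rw [← hshift, (logDeriv_congr_nhds hrec).eq_of_nhds, logDeriv_mul (f := fun y => y) x hx.ne'
    (Gamma_pos_of_pos hx).ne' differentiableAt_id (differentiableAt_Gamma_of_pos hx), logDeriv_id',
    logDeriv_apply, digamma]
  ring

lemma digamma_monotoneOn : MonotoneOn digamma (Ioi 0) := by
  intro x hx y hy hxy
  rw [digamma_eq_deriv_log_Gamma hx, digamma_eq_deriv_log_Gamma hy]
  exact convexOn_log_Gamma.monotoneOn_deriv
    (fun z hz => (differentiableAt_Gamma_of_pos hz).log (Gamma_pos_of_pos hz).ne') hx hy hxy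

lemma digamma_add_nat {x : ℝ} (hx : 0 < x) (n : ℕ) :
    digamma (x + n) = digamma x + ∑ k ∈ Finset.range n, 1 / (x + k) := by
  induction n with
  | zero => simp
  | succ n ih =>
    rw [Nat.cast_succ, ← add_assoc, digamma_add_one (by positivity), ih, Finset.sum_range_succ,
      add_assoc]

lemma digamma_add_nat_sub_le {u v : ℝ} (hu : 0 < u) (huv : u ≤ v) (m : ℕ) (hm : v ≤ u + m)
    {n : ℕ} (hn : 0 < n) : digamma (v + n) - digamma (u + n) ≤ m / n := by
  have hn' : (0 : ℝ) < n := by exact_mod_cast hn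
  have hv : 0 < v := hu.trans_le huv
  have hmono : digamma (v + n) ≤ digamma (u + n + m) :=
    digamma_monotoneOn (mem_Ioi.2 (by positivity)) (mem_Ioi.2 (by positivity)) (by linarith)
  have hsum : ∑ k ∈ Finset.range m, 1 / (u + n + k) ≤ m / n := by
    calc ∑ k ∈ Finset.range m, 1 / (u + n + k)
        ≤ ∑ _k ∈ Finset.range m, 1 / (n : ℝ) :=
          Finset.sum_le_sum fun k _ =>
            one_div_le_one_div_of_le hn' (by linarith [(k.cast_nonneg : (0 : ℝ) ≤ k)])
      _ = m / n := by simp [div_eq_mul_inv]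
  linarith [digamma_add_nat (show 0 < u + n by positivity) m]

lemma tendsto_digamma_add_nat_sub {u v : ℝ} (hu : 0 < u) (huv : u ≤ v) :
    Tendsto (fun n : ℕ => digamma (v + n) - digamma (u + n)) atTop (𝓝 0) := by
  have hv : 0 < v := hu.trans_le huv
  obtain ⟨m, hm⟩ := exists_nat_ge (v - u)
  refine squeeze_zero' (Eventually.of_forall fun n => sub_nonneg.2 ?_) ?_
    (tendsto_const_div_atTop_nhds_zero_nat (m : ℝ))
  · exact digamma_monotoneOn (mem_Ioi.2 (by positivity)) (mem_Ioi.2 (by positivity)) (by linarith)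
  · filter_upwards [eventually_gt_atTop 0] with n hn
    exact digamma_add_nat_sub_le hu huv m (by linarith) hn

lemma hasSum_digamma_sub_digamma {u v : ℝ} (hu : 0 < u) (huv : u ≤ v) :
    HasSum (fun k : ℕ => 1 / (u + k) - 1 / (v + k)) (digamma v - digamma u) := by
  have hv : 0 < v := hu.trans_le huv
  rw [hasSum_iff_tendsto_nat_of_nonneg
    fun k => sub_nonneg.2 (one_div_le_one_div_of_le (by positivity) (by linarith))]
  have hpartial : ∀ n : ℕ, ∑ k ∈ Finset.range n, (1 / (u + k) - 1 / (v + k))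
      = (digamma v - digamma u) - (digamma (v + n) - digamma (u + n)) := by
    intro n
    rw [Finset.sum_sub_distrib, digamma_add_nat hu, digamma_add_nat hv]
    ring
  simp only [hpartial]
  simpa using tendsto_const_nhds.sub (tendsto_digamma_add_nat_sub hu huv)

lemma hasSum_digamma_add_sub_div {r x : ℝ} (hr : 0 < r) (hx : 0 < x) :
    HasSum (fun k : ℕ => 1 / ((r + k) * (x + r + k))) ((digamma (x + r) - digamma r) / x) := by
  have hterm : ∀ k : ℕ, (1 / (r + k) - 1 / (x + r + k)) / x = 1 / ((r + k) * (x + r + k)) := by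
    intro k
    have hrk : 0 < r + k := by positivity
    field_simp
    ring
  simpa only [hterm] using (hasSum_digamma_sub_digamma hr (by linarith : r ≤ x + r)).div_const x

lemma strictAntiOn_digamma_add_sub_div {r : ℝ} (hr : 0 < r) :
    StrictAntiOn (fun x => (digamma (x + r) - digamma r) / x) (Ioi 0) := by
  intro x hx y hy hxy
  refine hasSum_lt (i := 0) (fun k => ?_) ?_ (hasSum_digamma_add_sub_div hr hy)
    (hasSum_digamma_add_sub_div hr hx)
  · simp only [mem_Ioi] at hx
    gcongr
  · simp only [mem_Ioi] at hx
    simp only [Nat.cast_zero, add_zero]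
    gcongr

lemma rise_pos {x r : ℝ} (hx : 0 < x) (hr : 0 ≤ r) : 0 < rise x r :=
  div_pos (Gamma_pos_of_pos (by linarith)) (Gamma_pos_of_pos hx)

lemma hyp_zero_div_rise {x : ℝ} (hx : 0 < x) : hyp 0 x / rise x 0 = 1 / x := by
  rw [hyp, if_pos rfl, rise, add_zero, div_self (Gamma_pos_of_pos hx).ne', div_one]

lemma hyp_div_rise_of_pos {r x : ℝ} (hr : 0 < r) (hx : 0 < x) :
    hyp r x / rise x r = (digamma (x + r) - digamma r) / x / Gamma r := by
  have hrise := (rise_pos hx hr.le).ne'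
  rw [hyp, if_neg hr.ne']
  field_simp

theorem strictAntiOn_hyp_div_rise {r : ℝ} (hr : 0 ≤ r) :
    StrictAntiOn (fun x => hyp r x / rise x r) (Ioi 0) := by
  intro x hx y hy hxy
  rcases hr.eq_or_lt with rfl | hr
  · simp only [hyp_zero_div_rise hx, hyp_zero_div_rise hy]
    exact one_div_lt_one_div_of_lt hx hxy
  · simp only [hyp_div_rise_of_pos hr hx, hyp_div_rise_of_pos hr hy]
    exact div_lt_div_of_pos_right (strictAntiOn_digamma_add_sub_div hr hx hy hxy)
      (Gamma_pos_of_pos hr)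

section Integral

variable {f : ℝ → ℝ} {a b : ℝ}

lemma AntitoneOn.intervalIntegrable_of_le (hab : a ≤ b) (hf : AntitoneOn f (Icc a b)) :
    IntervalIntegrable f volume a b :=
  AntitoneOn.intervalIntegrable (by rwa [uIcc_of_le hab])

lemma AntitoneOn.integral_le_mul (hab : a ≤ b) (hf : AntitoneOn f (Icc a b)) :
    ∫ x in a..b, f x ≤ (b - a) * f a := by
  have h := intervalIntegral.integral_mono_on hab (hf.intervalIntegrable_of_le hab)
    intervalIntegrable_const fun x hx => hf (left_mem_Icc.2 hab) hx hx.1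
  rwa [intervalIntegral.integral_const, smul_eq_mul] at h

lemma AntitoneOn.mul_le_integral (hab : a ≤ b) (hf : AntitoneOn f (Icc a b)) :
    (b - a) * f b ≤ ∫ x in a..b, f x := by
  have h := intervalIntegral.integral_mono_on hab intervalIntegrable_const
    (hf.intervalIntegrable_of_le hab) fun x hx => hf hx (right_mem_Icc.2 hab) hx.2
  rwa [intervalIntegral.integral_const, smul_eq_mul] at h

lemma StrictAntiOn.integral_lt_mul (hab : a < b) (hf : StrictAntiOn f (Icc a b)) :
    ∫ x in a..b, f x < (b - a) * f a := by
  obtain ⟨m, ham, hmb⟩ := exists_between hab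
  have hleft := hf.antitoneOn.mono (Icc_subset_Icc_right hmb.le)
  have hright := hf.antitoneOn.mono (Icc_subset_Icc_left ham.le)
  have hfm : f m < f a := hf (left_mem_Icc.2 hab.le) ⟨ham.le, hmb.le⟩ ham
  rw [← intervalIntegral.integral_add_adjacent_intervals (hleft.intervalIntegrable_of_le ham.le)
    (hright.intervalIntegrable_of_le hmb.le)]
  nlinarith [hleft.integral_le_mul ham.le, hright.integral_le_mul hmb.le]

lemma StrictAntiOn.mul_lt_integral (hab : a < b) (hf : StrictAntiOn f (Icc a b)) :
    (b - a) * f b < ∫ x in a..b, f x := by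
  obtain ⟨m, ham, hmb⟩ := exists_between hab
  have hleft := hf.antitoneOn.mono (Icc_subset_Icc_right hmb.le)
  have hright := hf.antitoneOn.mono (Icc_subset_Icc_left ham.le)
  have hfm : f b < f m := hf ⟨ham.le, hmb.le⟩ (right_mem_Icc.2 hab.le) hmb
  rw [← intervalIntegral.integral_add_adjacent_intervals (hleft.intervalIntegrable_of_le ham.le)
    (hright.intervalIntegrable_of_le hmb.le)]
  nlinarith [hleft.mul_le_integral ham.le, hright.mul_le_integral hmb.le]

end Integral

section Limits

variable {α : Type*} [Preorder α] [TopologicalSpace α] [OrderClosedTopology α] {u : ℕ → α} {l : α}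
  {N : ℕ}

theorem lt_of_tendsto_of_lt_add_one (hu : ∀ n, N ≤ n → u n < u (n + 1))
    (hl : Tendsto u atTop (𝓝 l)) {n : ℕ} (hn : N ≤ n) : u n < l := by
  have hmono : Monotone fun k => u (k + n) :=
    monotone_nat_of_le_succ fun k => by rw [add_right_comm]; exact (hu _ (by omega)).le
  exact (hu n hn).trans_le <| by
    simpa [add_comm] using hmono.ge_of_tendsto (hl.comp (tendsto_add_atTop_nat n)) 1

theorem lt_of_tendsto_of_add_one_lt (hu : ∀ n, N ≤ n → u (n + 1) < u n)
    (hl : Tendsto u atTop (𝓝 l)) {n : ℕ} (hn : N ≤ n) : l < u n :=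
  lt_of_tendsto_of_lt_add_one (α := αᵒᵈ) hu hl hn

end Limits

section Sequences

variable {r : ℝ}

lemma strictAntiOn_Icc_hyp_div_rise (hr : 0 ≤ r) {a b : ℝ} (ha : 0 < a) :
    StrictAntiOn (fun x => hyp r x / rise x r) (Icc a b) :=
  (strictAntiOn_hyp_div_rise hr).mono fun _ hx => ha.trans_le hx.1

lemma bseq_eq_aseq_add (r : ℝ) {n : ℕ} (hn : 1 ≤ n) :
    bseq r n = aseq r n + hyp r n / rise n r := by
  obtain ⟨p, rfl⟩ : ∃ p, n = p + 1 := ⟨n - 1, by omega⟩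
  rw [bseq, aseq, Finset.sum_Icc_succ_top (by omega : 1 ≤ p + 1), Nat.add_sub_cancel]
  ring

lemma aseq_add_one (hr : 0 ≤ r) {n : ℕ} (hn : 1 ≤ n) :
    aseq r (n + 1) = bseq r n - ∫ x in (n : ℝ)..(n + 1 : ℝ), hyp r x / rise x r := by
  have hn' : (0 : ℝ) < n := by exact_mod_cast hn
  rw [aseq, bseq, Nat.add_sub_cancel, Nat.cast_succ,
    ← intervalIntegral.integral_add_adjacent_intervals (b := (n : ℝ))
      ((strictAntiOn_Icc_hyp_div_rise hr one_pos).antitoneOn.intervalIntegrable_of_le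
        (by exact_mod_cast hn))
      ((strictAntiOn_Icc_hyp_div_rise hr hn').antitoneOn.intervalIntegrable_of_le (by linarith))]
  ring

lemma aseq_lt_aseq_add_one (hr : 0 ≤ r) {n : ℕ} (hn : 1 ≤ n) : aseq r n < aseq r (n + 1) := by
  have hn' : (0 : ℝ) < n := by exact_mod_cast hn
  have h := (strictAntiOn_Icc_hyp_div_rise hr hn').integral_lt_mul (lt_add_one (n : ℝ))
  rw [add_sub_cancel_left, one_mul] at h
  linarith [bseq_eq_aseq_add r hn, aseq_add_one hr hn]

lemma bseq_add_one_lt_bseq (hr : 0 ≤ r) {n : ℕ} (hn : 1 ≤ n) : bseq r (n + 1) < bseq r n := by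
  have hn' : (0 : ℝ) < n := by exact_mod_cast hn
  have h := (strictAntiOn_Icc_hyp_div_rise hr hn').mul_lt_integral (lt_add_one (n : ℝ))
  rw [add_sub_cancel_left, one_mul] at h
  have e := bseq_eq_aseq_add r (Nat.le_add_left 1 n)
  push_cast at e
  linarith [aseq_add_one hr hn]

end Sequences

theorem ab_estimates (r : ℝ) (hr : 0 ≤ r) (γbar : ℝ)
    (ha : Tendsto (aseq r) atTop (𝓝 γbar)) (hb : Tendsto (bseq r) atTop (𝓝 γbar))
    (n : ℕ) (hn : 1 ≤ n) :
    let C : ℝ := hyp r n / rise n r - ∫ x in (n : ℝ)..(n + 1 : ℝ), hyp r x / rise x r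
    let D : ℝ := ∫ x in (n : ℝ)..(n + 1 : ℝ), hyp r x / rise x r
    (C < γbar - aseq r n ∧ γbar - aseq r n < C + hyp r (n + 1) / rise ((n : ℝ) + 1) r) ∧
    (D - hyp r (n + 1) / rise ((n : ℝ) + 1) r < bseq r n - γbar ∧ bseq r n - γbar < D) := by
  intro C D
  have haγ : aseq r (n + 1) < γbar :=
    lt_of_tendsto_of_lt_add_one (fun _ => aseq_lt_aseq_add_one hr) ha (Nat.le_add_left 1 n)
  have hγb : γbar < bseq r (n + 1) :=
    lt_of_tendsto_of_add_one_lt (fun _ => bseq_add_one_lt_bseq hr) hb (Nat.le_add_left 1 n)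
  have hb_eq := bseq_eq_aseq_add r hn
  have hb_succ_eq := bseq_eq_aseq_add r (Nat.le_add_left 1 n)
  push_cast at hb_succ_eq
  have ha_succ_eq := aseq_add_one hr hn
  refine ⟨⟨?_, ?_⟩, ?_, ?_⟩ <;> linarith
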